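/- arXiv:1509.05410 — 3 statements merged into one kernel-verified Lean document; each statement's English description precedes it below -/
import Mathlib

section
/- Let $M_m(\mathbb{R})$ be the space of real $m\times m$ matrices with inner product $\langle X,Y\rangle = \mathrm{tr}(XY^*)$. Then for all $X,Y \in M_m(\mathbb{R})$: $\|X\|^2\|Y\|^2 - \langle X,Y\rangle^2 + \frac{2}{m}\mathrm{tr}(X)\mathrm{tr}(Y)\langle X,Y\rangle \geq \frac{1}{m}\left(\mathrm{tr}(Y)^2\|X\|^2 + \mathrm{tr}(X)^2\|Y\|^2\right)$. -/
open Matrix Finset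

theorem frobenius_trace_inequality (m : ℕ) (hm : 0 < m)
    (X Y : Matrix (Fin m) (Fin m) ℝ) :
    trace (X * Xᵀ) * trace (Y * Yᵀ) - (trace (X * Yᵀ))^2
      + (2 / (m : ℝ)) * trace X * trace Y * trace (X * Yᵀ)
      ≥ (1 / (m : ℝ)) * ((trace Y)^2 * trace (X * Xᵀ) + (trace X)^2 * trace (Y * Yᵀ)) := by
  have hm' : (m:ℝ) ≠ 0 := Nat.cast_ne_zero.mpr hm.ne'
  have hmpos : (0:ℝ) < m := Nat.cast_pos.mpr hm
  set a := trace X with ha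
  set b := trace Y with hb
  set A : Matrix (Fin m) (Fin m) ℝ := X - (a/m) • 1 with hA
  set B : Matrix (Fin m) (Fin m) ℝ := Y - (b/m) • 1 with hB
  have tr_eq : ∀ (P Q : Matrix (Fin m) (Fin m) ℝ),
      trace (P * Qᵀ) = ∑ p : Fin m × Fin m, P p.1 p.2 * Q p.1 p.2 := by
    intro P Q
    simp [Matrix.trace, Matrix.mul_apply, Matrix.diag, Matrix.transpose_apply,
      Fintype.sum_prod_type]
  have key : (trace (A * Bᵀ))^2 ≤ trace (A * Aᵀ) * trace (B * Bᵀ) := by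
    rw [tr_eq, tr_eq, tr_eq]
    have := Finset.sum_mul_sq_le_sq_mul_sq Finset.univ
      (fun p : Fin m × Fin m => A p.1 p.2) (fun p : Fin m × Fin m => B p.1 p.2)
    simpa [sq] using this
  have expand : ∀ (P Q : Matrix (Fin m) (Fin m) ℝ) (c d : ℝ),
      trace ((P - c • 1) * (Q - d • 1)ᵀ)
        = trace (P * Qᵀ) - d * trace P - c * trace Q + c * d * m := by
    intro P Q c d
    simp [Matrix.sub_mul, Matrix.mul_sub, Matrix.transpose_sub, Matrix.transpose_smul,
      Matrix.transpose_one, Matrix.smul_mul, Matrix.mul_smul, trace_sub, trace_smul,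
      Matrix.trace_transpose, smul_eq_mul, Matrix.trace_one]
    ring
  have e1 : trace (A * Bᵀ) = trace (X * Yᵀ) - a*b/m := by
    rw [hA, hB, expand]; field_simp; ring
  have e2 : trace (A * Aᵀ) = trace (X * Xᵀ) - a^2/m := by
    rw [hA, expand]; field_simp; ring
  have e3 : trace (B * Bᵀ) = trace (Y * Yᵀ) - b^2/m := by
    rw [hB, expand]; field_simp; ring
  rw [ge_iff_le, ← sub_nonneg]
  have hd : trace (X * Xᵀ) * trace (Y * Yᵀ) - (trace (X * Yᵀ))^2
      + (2 / (m : ℝ)) * a * b * trace (X * Yᵀ)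
      - (1 / (m : ℝ)) * (b^2 * trace (X * Xᵀ) + a^2 * trace (Y * Yᵀ))
      = trace (A * Aᵀ) * trace (B * Bᵀ) - (trace (A * Bᵀ))^2 := by
    rw [e1, e2, e3]; field_simp; ring
  rw [hd]
  linarith [key]
end

section
/- Let $X, Z \in M_m(\mathbb{R})$ with $\mathrm{tr}(X) = \mathrm{tr}(Z) = 1$ and $\mathrm{tr}(XZ^*) = 0$. Then $\|X\|^2\|Z\|^2 \geq \frac{1}{m}(\|X\|^2 + \|Z\|^2)$, where $\|X\|^2 = \mathrm{tr}(XX^*)$. -/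
/-!
Flatten matrices to Euclidean vectors, so that `tr (A * Bᵀ)` becomes the inner product. The
identity matrix `I` then satisfies `⟪I, X⟫ = tr X = 1`, `⟪I, Z⟫ = 1` and `‖I‖² = m`, and Bessel's
inequality for the orthogonal pair `X, Z` gives `1 / ‖X‖² + 1 / ‖Z‖² ≤ ‖I‖² = m`.
-/

open Matrix RealInnerProductSpace

section InnerProductSpace

variable {F : Type*} [NormedAddCommGroup F] [InnerProductSpace ℝ F]

theorem inner_sq_div_add_inner_sq_div_le_norm_sq {x z : F} (hxz : ⟪x, z⟫ = 0) (e : F) :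
    ⟪e, x⟫ ^ 2 / ‖x‖ ^ 2 + ⟪e, z⟫ ^ 2 / ‖z‖ ^ 2 ≤ ‖e‖ ^ 2 := by
  -- `a • x + b • z` is the orthogonal projection of `e` onto `span {x, z}`.
  set a := ⟪e, x⟫ / ‖x‖ ^ 2
  set b := ⟪e, z⟫ / ‖z‖ ^ 2
  have hproj (v : F) : ⟪e, v⟫ / ‖v‖ ^ 2 * ⟪e, v⟫ = ⟪e, v⟫ ^ 2 / ‖v‖ ^ 2 := by ring
  have hnorm (v : F) : (⟪e, v⟫ / ‖v‖ ^ 2) ^ 2 * ‖v‖ ^ 2 = ⟪e, v⟫ ^ 2 / ‖v‖ ^ 2 := by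
    rcases eq_or_ne v 0 with rfl | hv
    · simp
    · field_simp
  have hp : ‖a • x + b • z‖ ^ 2 = a ^ 2 * ‖x‖ ^ 2 + b ^ 2 * ‖z‖ ^ 2 := by
    rw [norm_add_sq_real, real_inner_smul_left, real_inner_smul_right, hxz, norm_smul, norm_smul,
      mul_pow, mul_pow, Real.norm_eq_abs, Real.norm_eq_abs, sq_abs, sq_abs]
    ring
  have hep : ⟪e, a • x + b • z⟫ = a * ⟪e, x⟫ + b * ⟪e, z⟫ := by
    rw [inner_add_right, real_inner_smul_right, real_inner_smul_right]
  have hres := sq_nonneg ‖e - (a • x + b • z)‖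
  rw [norm_sub_sq_real, hp, hep, hproj, hproj, hnorm, hnorm] at hres
  linarith

theorem norm_sq_add_norm_sq_div_le_of_inner_eq_one {e x z : F} (hx : ⟪e, x⟫ = 1)
    (hz : ⟪e, z⟫ = 1) (hxz : ⟪x, z⟫ = 0) :
    (‖x‖ ^ 2 + ‖z‖ ^ 2) / ‖e‖ ^ 2 ≤ ‖x‖ ^ 2 * ‖z‖ ^ 2 := by
  have hpos {v w : F} (h : ⟪v, w⟫ = 1) : 0 < ‖v‖ ^ 2 ∧ 0 < ‖w‖ ^ 2 := by
    constructor <;> refine pow_pos (norm_pos_iff.2 ?_) 2 <;> rintro rfl <;> simp at h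
  obtain ⟨he, hx₀⟩ := hpos hx
  have hz₀ := (hpos hz).2
  have hbessel := inner_sq_div_add_inner_sq_div_le_norm_sq hxz e
  rw [hx, hz, one_pow, one_div_add_one_div hx₀.ne' hz₀.ne', div_le_iff₀ (mul_pos hx₀ hz₀)]
    at hbessel
  rw [div_le_iff₀ he]
  linarith

end InnerProductSpace

namespace Matrix

variable {m n : Type*} [Fintype m] [Fintype n]

def frobeniusVec (A : Matrix m n ℝ) : EuclideanSpace ℝ (m × n) :=
  WithLp.toLp 2 fun p => A p.1 p.2

theorem inner_frobeniusVec (A B : Matrix m n ℝ) :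
    ⟪frobeniusVec A, frobeniusVec B⟫ = trace (A * Bᵀ) := by
  simp [frobeniusVec, PiLp.inner_apply, trace, mul_apply, Fintype.sum_prod_type, mul_comm]

theorem norm_frobeniusVec_sq (A : Matrix m n ℝ) : ‖frobeniusVec A‖ ^ 2 = trace (A * Aᵀ) := by
  rw [← real_inner_self_eq_norm_sq, inner_frobeniusVec]

end Matrix

theorem frobenius_trace_one_orthogonal_general (m : ℕ)
    (X Z : Matrix (Fin m) (Fin m) ℝ)
    (hX : trace X = 1) (hZ : trace Z = 1) (hXZ : trace (X * Zᵀ) = 0) :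
    trace (X * Xᵀ) * trace (Z * Zᵀ) ≥ (1 / (m : ℝ)) * (trace (X * Xᵀ) + trace (Z * Zᵀ)) := by
  have hdim : ‖frobeniusVec (1 : Matrix (Fin m) (Fin m) ℝ)‖ ^ 2 = m := by
    simp [norm_frobeniusVec_sq]
  have hone (A : Matrix (Fin m) (Fin m) ℝ) : ⟪frobeniusVec 1, frobeniusVec A⟫ = trace A := by
    rw [inner_frobeniusVec, one_mul, trace_transpose]
  have key := norm_sq_add_norm_sq_div_le_of_inner_eq_one ((hone X).trans hX) ((hone Z).trans hZ)
    ((inner_frobeniusVec X Z).trans hXZ)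
  rw [hdim, norm_frobeniusVec_sq, norm_frobeniusVec_sq] at key
  rw [ge_iff_le, one_div_mul_eq_div]
  exact key

theorem frobenius_trace_one_orthogonal (m : ℕ) (hm : 0 < m)
    (X Z : Matrix (Fin m) (Fin m) ℝ)
    (hX : trace X = 1) (hZ : trace Z = 1) (hXZ : trace (X * Zᵀ) = 0) :
    trace (X * Xᵀ) * trace (Z * Zᵀ) ≥ (1 / (m : ℝ)) * (trace (X * Xᵀ) + trace (Z * Zᵀ)) :=
  frobenius_trace_one_orthogonal_general m X Z hX hZ hXZ
end

section
/- Let $\alpha > 0$ and define $s(t) = \alpha\left(\frac{\alpha t}{1 - \alpha t \cot(\alpha t)} + \cot(\alpha t)\right)$ for $t \in (0, \pi/\alpha)$. Then $s$ is finite on $(0, \pi/\alpha)$ and blows up (in absolute value) as $t \to \pi/\alpha$; i.e., $1 - \alpha t\cot(\alpha t) \neq 0$ for $t \in (0, \pi/\alpha)$ and $\lim_{t \to (\pi/\alpha)^-} |s(t)| = +\infty$. -/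
open Real Filter Set Topology

/-- The normalized comparison function: `s t = α * limitingComparison (α * t)`. -/
noncomputable def limitingComparison (x : ℝ) : ℝ :=
  x / (1 - x * (cos x / sin x)) + cos x / sin x

lemma tendsto_const_mul_nhdsLT {𝕜 : Type*} [Field 𝕜] [LinearOrder 𝕜] [IsStrictOrderedRing 𝕜]
    [TopologicalSpace 𝕜] [OrderTopology 𝕜] {c : 𝕜} (hc : 0 < c) (a : 𝕜) :
    Tendsto (c * ·) (𝓝[<] a) (𝓝[<] (c * a)) :=
  tendsto_nhdsWithin_of_tendsto_nhds_of_eventually_within _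
    ((continuous_const_mul c).tendsto a |>.mono_left nhdsWithin_le_nhds)
    (eventually_nhdsWithin_of_forall fun _ hx => mul_lt_mul_of_pos_left hx hc)

namespace Real

/-- `sin y - y cos y` vanishes at `0` and has derivative `y sin y > 0` on `(0, π)`. -/
lemma mul_cos_lt_sin {x : ℝ} (hx₀ : 0 < x) (hxπ : x ≤ π) : x * cos x < sin x := by
  have hmono : StrictMonoOn (fun y => sin y - y * cos y) (Icc 0 π) := by
    refine strictMonoOn_of_deriv_pos (convex_Icc 0 π) (by fun_prop) fun y hy => ?_
    rw [interior_Icc] at hy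
    have hderiv : HasDerivAt (fun y => sin y - y * cos y) (y * sin y) y :=
      ((hasDerivAt_sin y).sub ((hasDerivAt_id' y).mul (hasDerivAt_cos y))).congr_deriv (by ring)
    rw [hderiv.deriv]
    exact mul_pos hy.1 (sin_pos_of_pos_of_lt_pi hy.1 hy.2)
  simpa using hmono (left_mem_Icc.2 pi_pos.le) ⟨hx₀.le, hxπ⟩ hx₀

lemma one_sub_mul_cot_pos {x : ℝ} (hx₀ : 0 < x) (hxπ : x < π) :
    0 < 1 - x * (cos x / sin x) := by
  have hsin := sin_pos_of_pos_of_lt_pi hx₀ hxπ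
  have hkey := mul_cos_lt_sin hx₀ hxπ.le
  rw [mul_div_assoc', one_sub_div hsin.ne']
  exact div_pos (sub_pos.2 hkey) hsin

lemma tendsto_sin_nhdsLT_pi : Tendsto sin (𝓝[<] π) (𝓝[>] 0) :=
  tendsto_nhdsWithin_of_tendsto_nhds_of_eventually_within _
    (sin_pi ▸ continuous_sin.tendsto π |>.mono_left nhdsWithin_le_nhds)
    (by
      filter_upwards [Ioo_mem_nhdsLT pi_pos] with x hx
      exact sin_pos_of_pos_of_lt_pi hx.1 hx.2)

lemma tendsto_cos_div_sin_nhdsLT_pi : Tendsto (fun x => cos x / sin x) (𝓝[<] π) atBot := by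
  have hcos : Tendsto cos (𝓝[<] π) (𝓝 (-1)) :=
    cos_pi ▸ continuous_cos.tendsto π |>.mono_left nhdsWithin_le_nhds
  simpa only [div_eq_mul_inv, Pi.inv_apply] using
    hcos.neg_mul_atTop (by norm_num) tendsto_sin_nhdsLT_pi.inv_tendsto_nhdsGT_zero

end Real

/-- The denominator `1 - x cot x` tends to `+∞`, so the first summand tends to `0`,
while `cot x` tends to `-∞`. -/
lemma tendsto_limitingComparison_nhdsLT_pi : Tendsto limitingComparison (𝓝[<] π) atBot := by
  have hid : Tendsto (fun x : ℝ => x) (𝓝[<] π) (𝓝 π) := tendsto_nhdsWithin_of_tendsto_nhds tendsto_id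
  have hcot := tendsto_cos_div_sin_nhdsLT_pi
  have hden : Tendsto (fun x => 1 - x * (cos x / sin x)) (𝓝[<] π) atTop :=
    tendsto_atTop_add_const_left _ 1 (tendsto_neg_atBot_atTop.comp (hid.pos_mul_atBot pi_pos hcot))
  have hfirst : Tendsto (fun x => x / (1 - x * (cos x / sin x))) (𝓝[<] π) (𝓝 0) := by
    simpa only [div_eq_mul_inv, Pi.inv_apply, mul_zero] using hid.mul hden.inv_tendsto_atTop
  exact hfirst.add_atBot hcot

theorem limiting_comparison_function_blowup (α : ℝ) (hα : 0 < α) :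
    let cot : ℝ → ℝ := fun x => Real.cos x / Real.sin x
    let s : ℝ → ℝ := fun t =>
      α * (α * t / (1 - α * t * cot (α * t)) + cot (α * t))
    (∀ t ∈ Ioo (0:ℝ) (π / α), 1 - α * t * cot (α * t) ≠ 0) ∧
    Tendsto (fun t => |s t|) (nhdsWithin (π / α) (Iio (π / α))) atTop := by
  intro cot s
  refine ⟨fun t ht => (one_sub_mul_cot_pos (mul_pos hα ht.1) ((lt_div_iff₀' hα).1 ht.2)).ne', ?_⟩
  have hscale : Tendsto (α * ·) (𝓝[<] (π / α)) (𝓝[<] π) := by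
    simpa only [mul_div_cancel₀ π hα.ne'] using tendsto_const_mul_nhdsLT hα (π / α)
  have hs : Tendsto (fun t => α * limitingComparison (α * t)) (𝓝[<] (π / α)) atBot :=
    (tendsto_limitingComparison_nhdsLT_pi.const_mul_atBot hα).comp hscale
  exact tendsto_abs_atBot_atTop.comp hs
end
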